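/- The strong rainbow connection number of C_7 □ C_2 equals 4. -/

import Mathlib

open SimpleGraph Finset

/-- A coloring `c` of (potential) edges is a rainbow coloring of `G` if every pair of
distinct vertices is joined by a path whose edges have pairwise distinct colors. -/
def SimpleGraph.IsRainbowColoring {V α : Type*} (G : SimpleGraph V) (c : Sym2 V → α) : Prop :=
  ∀ u v : V, u ≠ v → ∃ p : G.Walk u v, p.IsPath ∧ (p.edges.map c).Nodup

/-- A strong rainbow coloring: every pair of distinct vertices is joined by a rainbow
path whose length equals the distance between them. -/
def SimpleGraph.IsStrongRainbowColoring {V α : Type*} (G : SimpleGraph V) (c : Sym2 V → α) : Prop :=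
  ∀ u v : V, u ≠ v → ∃ p : G.Walk u v, p.IsPath ∧ p.length = G.dist u v ∧ (p.edges.map c).Nodup

/-- The rainbow connection number: least number of colors of a rainbow coloring. -/
noncomputable def SimpleGraph.rc {V : Type*} (G : SimpleGraph V) : ℕ :=
  sInf {k : ℕ | ∃ c : Sym2 V → Fin k, G.IsRainbowColoring c}

/-- The strong rainbow connection number: least number of colors of a strong rainbow coloring. -/
noncomputable def SimpleGraph.src {V : Type*} (G : SimpleGraph V) : ℕ :=
  sInf {k : ℕ | ∃ c : Sym2 V → Fin k, G.IsStrongRainbowColoring c}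

/-- The toroidal mesh `C_{n 0} □ ⋯ □ C_{n (r-1)}`: the Cartesian (box) product of the
cycles `cycleGraph (n i)`. -/
def toroidalMesh {r : ℕ} (n : Fin r → ℕ) : SimpleGraph (∀ i, Fin (n i)) :=
  SimpleGraph.fromRel fun u v =>
    ∃ i, (cycleGraph (n i)).Adj (u i) (v i) ∧ ∀ j, j ≠ i → u j = v j

/-!
A strong rainbow path uses as many colours as its length, so the pair `(0, 0)`, `(3, 1)` at
distance 4 forces four colours. Conversely, colour both 7-cycles `0, 1, 2, 0, 1, 2, 3` in cyclic
order, the second one rotated by three steps, and all spokes `3`; a finite search then finds a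
rainbow geodesic between any two vertices.
-/

namespace SimpleGraph

variable {V α : Type*} {G : SimpleGraph V}

theorem Walk.length_eq_dist_of_finsetWalkLengthLT_eq_empty [DecidableEq V]
    [∀ v, Fintype (G.neighborSet v)] {u v : V} (p : G.Walk u v)
    (h : G.finsetWalkLengthLT p.length u v = ∅) : p.length = G.dist u v := by
  obtain ⟨q, hq⟩ := p.reachable.exists_walk_length_eq_dist
  refine le_antisymm ?_ (dist_le p)
  by_contra! hlt
  have hq_mem : q ∈ G.finsetWalkLengthLT p.length u v := mem_finsetWalkLengthLT_iff.2 (hq ▸ hlt)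
  simp [h] at hq_mem

theorem isStrongRainbowColoring_of_forall_exists {c : Sym2 V → α}
    (h : ∀ u v, ∃ p : G.Walk u v, p.length = G.dist u v ∧ (p.edges.map c).Nodup) :
    G.IsStrongRainbowColoring c := by
  intro u v _
  obtain ⟨p, hlen, hc⟩ := h u v
  exact ⟨p, p.isPath_of_length_eq_dist hlen, hlen, hc⟩

theorem IsStrongRainbowColoring.dist_le_card [Fintype α] {c : Sym2 V → α}
    (hc : G.IsStrongRainbowColoring c) (u v : V) : G.dist u v ≤ Fintype.card α := by
  obtain rfl | huv := eq_or_ne u v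
  · simp
  obtain ⟨p, -, hlen, hnodup⟩ := hc u v huv
  simpa [hlen] using hnodup.length_le_card

theorem src_eq_of_isStrongRainbowColoring {k : ℕ} {c : Sym2 V → Fin k}
    (hc : G.IsStrongRainbowColoring c) {u v : V} (huv : G.dist u v = k) : G.src = k := by
  have hk : k ∈ {k : ℕ | ∃ c : Sym2 V → Fin k, G.IsStrongRainbowColoring c} := ⟨c, hc⟩
  refine le_antisymm (Nat.sInf_le hk) (le_csInf ⟨k, hk⟩ ?_)
  rintro m ⟨c', hc'⟩
  simpa [huv] using hc'.dist_le_card u v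

end SimpleGraph

namespace SevenPrism

def prismDist (u v : Fin 7 × Fin 2) : ℕ :=
  min (u.1 - v.1).val (v.1 - u.1).val + if u.2 = v.2 then 0 else 1

def arcColor (l : Fin 2) (i : Fin 7) : Fin 4 :=
  ![0, 1, 2, 0, 1, 2, 3] (if l = 0 then i else i + 3)

def edgeColor (u v : Fin 7 × Fin 2) : Fin 4 :=
  if u.2 = v.2 ∧ v.1 = u.1 + 1 then arcColor u.2 u.1
  else if u.2 = v.2 ∧ u.1 = v.1 + 1 then arcColor v.2 v.1
  else 3

theorem edgeColor_comm : ∀ u v, edgeColor u v = edgeColor v u := by decide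

def prismColoring : Sym2 (Fin 7 × Fin 2) → Fin 4 := Sym2.lift ⟨edgeColor, edgeColor_comm⟩

theorem finsetWalkLengthLT_prismDist_eq_empty :
    ∀ u v, (cycleGraph 7 □ cycleGraph 2).finsetWalkLengthLT (prismDist u v) u v = ∅ := by
  decide +kernel

theorem exists_rainbow_mem_finsetWalkLength_prismDist :
    ∀ u v, ∃ p ∈ (cycleGraph 7 □ cycleGraph 2).finsetWalkLength (prismDist u v) u v,
      (p.edges.map prismColoring).Nodup := by
  decide +kernel

theorem dist_eq_prismDist (u v : Fin 7 × Fin 2) :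
    (cycleGraph 7 □ cycleGraph 2).dist u v = prismDist u v := by
  obtain ⟨p, hp, -⟩ := exists_rainbow_mem_finsetWalkLength_prismDist u v
  rw [mem_finsetWalkLength_iff] at hp
  rw [← hp]
  exact (p.length_eq_dist_of_finsetWalkLengthLT_eq_empty
    (hp ▸ finsetWalkLengthLT_prismDist_eq_empty u v)).symm

theorem isStrongRainbowColoring_prismColoring :
    (cycleGraph 7 □ cycleGraph 2).IsStrongRainbowColoring prismColoring :=
  isStrongRainbowColoring_of_forall_exists fun u v => by
    obtain ⟨p, hp, hrainbow⟩ := exists_rainbow_mem_finsetWalkLength_prismDist u v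
    exact ⟨p, by rw [dist_eq_prismDist, ← mem_finsetWalkLength_iff]; exact hp, hrainbow⟩

end SevenPrism

theorem stmt_18 : (cycleGraph 7 □ cycleGraph 2).src = 4 :=
  src_eq_of_isStrongRainbowColoring SevenPrism.isStrongRainbowColoring_prismColoring
    (u := (0, 0)) (v := (3, 1)) (by rw [SevenPrism.dist_eq_prismDist]; rfl)
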